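/- Let X be a compact metric space, C a nonempty weak*-closed set of Borel probability measures on X, L: X → ℝ and ℓ: X → ℝⁿ continuous, and F(p) = sup_{μ ∈ C} ∫ (p·ℓ − L) dμ, attained with maximizer set M_p. Then the one-sided directional derivative from the left satisfies D_{ξ−}F(p) = lim_{t→0⁻} (F(p+tξ) − F(p))/t = min_{μ ∈ M_p} ∫ ξ·ℓ dμ. -/

import Mathlib

open MeasureTheory Filter Set TopologicalSpace
open scoped ENNReal NNReal Topology BoundedContinuousFunction

section AuxCompactness
variable {X : Type*} [MetricSpace X] [CompactSpace X] [MeasurableSpace X] [BorelSpace X]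

theorem probMeasure_exists_subseq_tendsto (μ : ℕ → ProbabilityMeasure X) :
    ∃ (ν : ProbabilityMeasure X) (φ : ℕ → ℕ), StrictMono φ ∧
      Tendsto (fun j => μ (φ j)) atTop (𝓝 ν) := by
  classical
  haveI : Nonempty X := by
    by_contra h
    rw [not_nonempty_iff] at h
    have h1 : ((μ 0 : Measure X) univ) = 1 := measure_univ
    rw [Set.univ_eq_empty_iff.mpr h, measure_empty] at h1
    exact zero_ne_one h1
  -- countable basis enumeration
  obtain ⟨b, hb⟩ := ((countable_countableBasis X).insert ∅).exists_eq_range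
    (insert_nonempty _ _)
  have hbopen : ∀ i, IsOpen (b i) := by
    intro i
    have : b i ∈ insert ∅ (countableBasis X) := hb ▸ mem_range_self i
    rcases this with h | h
    · rw [h]; exact isOpen_empty
    · exact isOpen_of_mem_countableBasis h
  set e : Finset ℕ → Set X := fun S => ⋃ i ∈ S, b i with he
  have heopen : ∀ S, IsOpen (e S) := fun S => isOpen_biUnion (fun i _ => hbopen i)
  have hemeas : ∀ S, MeasurableSet (e S) := fun S => (heopen S).measurableSet
  have heunion : ∀ S T, e (S ∪ T) = e S ∪ e T := by
    intro S T; simp [he, Finset.set_biUnion_union]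
  -- covering lemma
  have cover : ∀ (K V : Set X), IsCompact K → IsOpen V → K ⊆ V →
      ∃ S : Finset ℕ, K ⊆ e S ∧ e S ⊆ V := by
    intro K V hK hV hKV
    set U : ℕ → Set X := fun i => if b i ⊆ V then b i else ∅ with hU
    have hUopen : ∀ i, IsOpen (U i) := by
      intro i; rw [hU]; dsimp only; split_ifs
      · exact hbopen i
      · exact isOpen_empty
    have hcov : K ⊆ ⋃ i, U i := by
      intro x hx
      obtain ⟨t, htB, hxt, htV⟩ :=
        (isBasis_countableBasis X).exists_subset_of_mem_open (hKV hx) hV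
      have : t ∈ insert ∅ (countableBasis X) := mem_insert_of_mem _ htB
      rw [hb] at this
      obtain ⟨i, hi⟩ := this
      refine mem_iUnion.2 ⟨i, ?_⟩
      rw [hU]; dsimp only
      rw [if_pos (hi ▸ htV)]
      exact hi ▸ hxt
    obtain ⟨S, hS⟩ := hK.elim_finite_subcover U hUopen hcov
    refine ⟨S.filter (fun i => b i ⊆ V), ?_, ?_⟩
    · intro x hx
      have := hS hx
      simp only [mem_iUnion, exists_prop] at this
      obtain ⟨i, hiS, hxU⟩ := this
      by_cases h : b i ⊆ V
      · refine mem_biUnion (Finset.mem_filter.2 ⟨hiS, h⟩) ?_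
        rw [hU] at hxU; dsimp only at hxU; rwa [if_pos h] at hxU
      · rw [hU] at hxU; dsimp only at hxU; rw [if_neg h] at hxU; exact absurd hxU (notMem_empty x)
    · exact iUnion₂_subset fun i hi => (Finset.mem_filter.1 hi).2
  -- diagonal extraction via sequential compactness of (Finset ℕ → ℝ≥0∞)
  obtain ⟨c, φ, hφ, hconv⟩ :=
    SeqCompactSpace.tendsto_subseq (X := Finset ℕ → ℝ≥0∞)
      (fun k S => (μ k : Measure X) (e S))
  have hc : ∀ S, Tendsto (fun j => (μ (φ j) : Measure X) (e S)) atTop (𝓝 (c S)) := by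
    intro S
    exact (tendsto_pi_nhds.1 hconv) S
  have hc_le_one : ∀ S, c S ≤ 1 := by
    intro S
    exact le_of_tendsto (hc S) (Eventually.of_forall (fun j => prob_le_one))
  have hc_ne_top : ∀ S, c S ≠ ⊤ := fun S => (lt_of_le_of_lt (hc_le_one S) ENNReal.one_lt_top).ne
  -- union's bound
  have hc_union_le : ∀ S T, c (S ∪ T) ≤ c S + c T := by
    intro S T
    refine le_of_tendsto_of_tendsto' (hc (S ∪ T)) ((hc S).add (hc T)) (fun j => ?_)
    rw [heunion]
    exact measure_union_le _ _
  have hc_add_le : ∀ S T W, Disjoint (e S) (e T) → e S ∪ e T ⊆ e W → c S + c T ≤ c W := by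
    intro S T W hd hsub
    refine le_of_tendsto_of_tendsto' ((hc S).add (hc T)) (hc W) (fun j => ?_)
    rw [← measure_union hd (hemeas T)]
    exact measure_mono hsub
  have hc_mono : ∀ S W, e S ⊆ e W → c S ≤ c W := by
    intro S W hsub
    refine le_of_tendsto_of_tendsto' (hc S) (hc W) (fun j => measure_mono hsub)
  -- the ENNReal-valued content
  set Λ : Compacts X → ℝ≥0∞ := fun K => ⨅ (S : Finset ℕ) (_ : (K : Set X) ⊆ e S), c S with hΛ
  have hΛ_le : ∀ (K : Compacts X) (S : Finset ℕ), (K : Set X) ⊆ e S → Λ K ≤ c S := by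
    intro K S h
    exact iInf₂_le S h
  have hΛ_exists : ∀ K : Compacts X, ∃ S : Finset ℕ, (K : Set X) ⊆ e S := by
    intro K
    obtain ⟨S, h1, _⟩ := cover K univ K.2 isOpen_univ (subset_univ _)
    exact ⟨S, h1⟩
  have hΛ_le_one : ∀ K : Compacts X, Λ K ≤ 1 := by
    intro K
    obtain ⟨S, hS⟩ := hΛ_exists K
    exact (hΛ_le K S hS).trans (hc_le_one S)
  have hΛ_ne_top : ∀ K, Λ K ≠ ⊤ := fun K => (lt_of_le_of_lt (hΛ_le_one K) ENNReal.one_lt_top).ne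
  have hΛ_mono : ∀ K₁ K₂ : Compacts X, (K₁ : Set X) ⊆ K₂ → Λ K₁ ≤ Λ K₂ := by
    intro K₁ K₂ h
    exact le_iInf₂ fun S hS => hΛ_le K₁ S (h.trans hS)
  have hΛ_sup_le : ∀ K₁ K₂ : Compacts X, Λ (K₁ ⊔ K₂) ≤ Λ K₁ + Λ K₂ := by
    intro K₁ K₂
    rw [hΛ]
    dsimp only
    rw [ENNReal.iInf_add]
    refine le_iInf fun S₁ => ?_
    rw [ENNReal.iInf_add]
    refine le_iInf fun h₁ => ?_
    rw [ENNReal.add_iInf]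
    refine le_iInf fun S₂ => ?_
    rw [ENNReal.add_iInf]
    refine le_iInf fun h₂ => ?_
    refine le_trans (iInf₂_le (S₁ ∪ S₂) ?_) (hc_union_le S₁ S₂)
    rw [heunion]
    exact union_subset_union h₁ h₂
  have hΛ_sup_disjoint : ∀ K₁ K₂ : Compacts X, Disjoint (K₁ : Set X) K₂ →
      Λ (K₁ ⊔ K₂) = Λ K₁ + Λ K₂ := by
    intro K₁ K₂ hd
    refine le_antisymm (hΛ_sup_le K₁ K₂) ?_
    obtain ⟨V₁, V₂, hV₁, hV₂, hKV₁, hKV₂, hVd⟩ :=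
      SeparatedNhds.of_isCompact_isCompact K₁.2 K₂.2 hd
    refine le_iInf₂ fun W hW => ?_
    have hW1 : (K₁ : Set X) ⊆ V₁ ∩ e W := subset_inter hKV₁ ((subset_union_left.trans hW))
    have hW2 : (K₂ : Set X) ⊆ V₂ ∩ e W := subset_inter hKV₂ ((subset_union_right.trans hW))
    obtain ⟨S₁, hS₁, hS₁'⟩ := cover K₁ (V₁ ∩ e W) K₁.2 (hV₁.inter (heopen W)) hW1
    obtain ⟨S₂, hS₂, hS₂'⟩ := cover K₂ (V₂ ∩ e W) K₂.2 (hV₂.inter (heopen W)) hW2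
    have hdisj : Disjoint (e S₁) (e S₂) :=
      hVd.mono (hS₁'.trans inter_subset_left) (hS₂'.trans inter_subset_left)
    have hsub : e S₁ ∪ e S₂ ⊆ e W :=
      union_subset (hS₁'.trans inter_subset_right) (hS₂'.trans inter_subset_right)
    calc Λ K₁ + Λ K₂ ≤ c S₁ + c S₂ := add_le_add (hΛ_le K₁ S₁ hS₁) (hΛ_le K₂ S₂ hS₂)
    _ ≤ c W := hc_add_le S₁ S₂ W hdisj hsub
  -- bundle into a Content
  set Γ : Content X :=
    { toFun := fun K => (Λ K).toNNReal
      mono' := by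
        intro K₁ K₂ h
        have := hΛ_mono K₁ K₂ h
        rwa [← ENNReal.coe_le_coe, ENNReal.coe_toNNReal (hΛ_ne_top K₁),
          ENNReal.coe_toNNReal (hΛ_ne_top K₂)]
      sup_disjoint' := by
        intro K₁ K₂ hd _ _
        have := hΛ_sup_disjoint K₁ K₂ hd
        rw [← ENNReal.coe_inj, ENNReal.coe_toNNReal (hΛ_ne_top _), ENNReal.coe_add,
          ENNReal.coe_toNNReal (hΛ_ne_top _), ENNReal.coe_toNNReal (hΛ_ne_top _)]
        exact this
      sup_le' := by
        intro K₁ K₂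
        have := hΛ_sup_le K₁ K₂
        rw [← ENNReal.coe_le_coe, ENNReal.coe_toNNReal (hΛ_ne_top _), ENNReal.coe_add,
          ENNReal.coe_toNNReal (hΛ_ne_top _), ENNReal.coe_toNNReal (hΛ_ne_top _)]
        exact this } with hΓ
  have hΓ_coe : ∀ K : Compacts X, (Γ K : ℝ≥0∞) = Λ K := by
    intro K
    rw [hΓ]
    exact ENNReal.coe_toNNReal (hΛ_ne_top K)
  -- the measure
  set ν₀ : Measure X := Γ.measure with hν₀
  have hν₀_open : ∀ (G : Set X), IsOpen G → ν₀ G = ⨆ (K : Compacts X) (_ : (K : Set X) ⊆ G), Λ K := by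
    intro G hG
    rw [hν₀, Γ.measure_apply hG.measurableSet, Γ.outerMeasure_of_isOpen G hG]
    simp only [Content.innerContent]
    congr 1
    ext K
    congr 1
    ext hK
    exact hΓ_coe K
  have hν₀_univ : ν₀ univ = 1 := by
    rw [hν₀_open univ isOpen_univ]
    have huniv : Λ ⟨univ, isCompact_univ⟩ = 1 := by
      have h1 : ∀ S : Finset ℕ, univ ⊆ e S → c S = 1 := by
        intro S hS
        have : e S = univ := eq_univ_of_univ_subset hS
        refine tendsto_nhds_unique (hc S) ?_
        rw [this]
        simp only [measure_univ]; exact tendsto_const_nhds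
      refine le_antisymm ?_ ?_
      · obtain ⟨S, hS⟩ := hΛ_exists ⟨univ, isCompact_univ⟩
        exact (hΛ_le _ S hS).trans_eq (h1 S hS)
      · exact le_iInf₂ fun S hS => (h1 S hS).ge
    refine le_antisymm ?_ ?_
    · exact iSup₂_le fun K _ => hΛ_le_one K
    · exact le_trans huniv.ge (le_iSup₂ (f := fun (K : Compacts X) (_ : (K : Set X) ⊆ univ) => Λ K)
        ⟨univ, isCompact_univ⟩ (subset_univ _))
  haveI hν₀_prob : IsProbabilityMeasure ν₀ := ⟨hν₀_univ⟩
  set ν : ProbabilityMeasure X := ⟨ν₀, hν₀_prob⟩ with hν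
  -- portmanteau condition, first in ℝ≥0∞
  have hport : ∀ (G : Set X), IsOpen G →
      ν₀ G ≤ atTop.liminf (fun j => (μ (φ j) : Measure X) G) := by
    intro G hG
    rw [hν₀_open G hG]
    refine iSup₂_le fun K hK => ?_
    obtain ⟨S, hS1, hS2⟩ := cover K G K.2 hG hK
    refine (hΛ_le K S hS1).trans ?_
    have h1 : c S = atTop.liminf (fun j => (μ (φ j) : Measure X) (e S)) := (hc S).liminf_eq.symm
    rw [h1]
    exact liminf_le_liminf (Eventually.of_forall fun j => measure_mono hS2)
  -- now in ℝ≥0 (ProbabilityMeasure coeFn)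
  refine ⟨ν, φ, hφ, ?_⟩
  apply MeasureTheory.tendsto_of_forall_isOpen_le_liminf
  intro G hG
  have aux : (ENNReal.ofNNReal (atTop.liminf (fun j => μ (φ j) G))) =
      atTop.liminf (ENNReal.ofNNReal ∘ (fun j => μ (φ j) G)) := by
    refine Monotone.map_liminf_of_continuousAt (F := atTop) ENNReal.coe_mono
      (fun j => μ (φ j) G) ENNReal.continuous_coe.continuousAt ?_ ?_
    · exact IsBoundedUnder.isCoboundedUnder_ge ⟨1, by simp⟩
    · exact ⟨0, by simp⟩
  rw [← ENNReal.coe_le_coe, aux]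
  have h2 : (ENNReal.ofNNReal (ν G)) = ν₀ G := by
    rw [hν]
    exact ProbabilityMeasure.ennreal_coeFn_eq_coeFn_toMeasure _ G
  rw [h2]
  refine (hport G hG).trans ?_
  refine liminf_le_liminf (Eventually.of_forall fun j => ?_)
  simp only [Function.comp_apply]
  rw [ProbabilityMeasure.ennreal_coeFn_eq_coeFn_toMeasure]

end AuxCompactness

theorem danskin_left_directional_derivative
    {X : Type*} [MetricSpace X] [CompactSpace X] [MeasurableSpace X] [BorelSpace X]
    {n : ℕ}
    (C : Set (ProbabilityMeasure X)) (hCne : C.Nonempty) (hCclosed : IsClosed C)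
    (L : X → ℝ) (hL : Continuous L)
    (ℓ : X → (Fin n → ℝ)) (hℓ : Continuous ℓ)
    (F : (Fin n → ℝ) → ℝ)
    (hFle : ∀ p : Fin n → ℝ, ∀ μ ∈ C,
      ∫ x, (∑ i, p i * ℓ x i - L x) ∂(μ : Measure X) ≤ F p)
    (hFeq : ∀ p : Fin n → ℝ, ∃ μ ∈ C,
      ∫ x, (∑ i, p i * ℓ x i - L x) ∂(μ : Measure X) = F p)
    (p ξ : Fin n → ℝ) :
    ∃ μ ∈ C, (∫ x, (∑ i, p i * ℓ x i - L x) ∂(μ : Measure X) = F p) ∧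
      (∀ ν ∈ C, (∫ x, (∑ i, p i * ℓ x i - L x) ∂(ν : Measure X) = F p) →
        ∫ x, (∑ i, ξ i * ℓ x i) ∂(μ : Measure X)
          ≤ ∫ x, (∑ i, ξ i * ℓ x i) ∂(ν : Measure X)) ∧
      Tendsto (fun t : ℝ => (F (p + t • ξ) - F p) / t) (nhdsWithin 0 (Set.Iio 0))
        (nhds (∫ x, (∑ i, ξ i * ℓ x i) ∂(μ : Measure X))) := by
  classical
  have hcontI : ∀ q : Fin n → ℝ, Continuous (fun x => ∑ i, q i * ℓ x i - L x) := fun q =>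
    (continuous_finset_sum _ fun i _ =>
      continuous_const.mul ((continuous_apply i).comp hℓ)).sub hL
  have hcontJ : Continuous (fun x => ∑ i, ξ i * ℓ x i) :=
    continuous_finset_sum _ fun i _ => continuous_const.mul ((continuous_apply i).comp hℓ)
  set fI : (Fin n → ℝ) → (X →ᵇ ℝ) := fun q =>
    BoundedContinuousFunction.mkOfCompact ⟨fun x => ∑ i, q i * ℓ x i - L x, hcontI q⟩ with hfI
  set fJ : X →ᵇ ℝ :=
    BoundedContinuousFunction.mkOfCompact ⟨fun x => ∑ i, ξ i * ℓ x i, hcontJ⟩ with hfJ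
  set I : (Fin n → ℝ) → ProbabilityMeasure X → ℝ :=
    fun q μ => ∫ x, (∑ i, q i * ℓ x i - L x) ∂(μ : Measure X) with hI
  set J : ProbabilityMeasure X → ℝ :=
    fun μ => ∫ x, (∑ i, ξ i * ℓ x i) ∂(μ : Measure X) with hJ
  have hIcont : ∀ q : Fin n → ℝ, Continuous (I q) := fun q =>
    MeasureTheory.ProbabilityMeasure.continuous_integral_boundedContinuousFunction (fI q)
  have hJcont : Continuous J :=
    MeasureTheory.ProbabilityMeasure.continuous_integral_boundedContinuousFunction fJ
  have hInt1 : ∀ (q : Fin n → ℝ) (μ : ProbabilityMeasure X),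
      Integrable (fun x => ∑ i, q i * ℓ x i - L x) (μ : Measure X) :=
    fun q μ => (fI q).integrable _
  have hInt2 : ∀ (μ : ProbabilityMeasure X),
      Integrable (fun x => ∑ i, ξ i * ℓ x i) (μ : Measure X) :=
    fun μ => fJ.integrable _
  have hsplit : ∀ (t : ℝ) (μ : ProbabilityMeasure X), I (p + t • ξ) μ = I p μ + t * J μ := by
    intro t μ
    have heq : ∀ x, ∑ i, (p + t • ξ) i * ℓ x i - L x
        = (∑ i, p i * ℓ x i - L x) + t * ∑ i, ξ i * ℓ x i := by
      intro x
      simp only [Pi.add_apply, Pi.smul_apply, smul_eq_mul, add_mul, Finset.sum_add_distrib,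
        Finset.mul_sum]
      ring
    calc I (p + t • ξ) μ
        = ∫ x, ((∑ i, p i * ℓ x i - L x) + t * ∑ i, ξ i * ℓ x i) ∂(μ : Measure X) :=
          integral_congr_ae (Eventually.of_forall (fun x => heq x))
      _ = I p μ + t * J μ := by
          rw [integral_add (hInt1 p μ) ((hInt2 μ).const_mul t), integral_const_mul]
  set B : ℝ := ‖fJ‖ with hB
  have hJB : ∀ μ : ProbabilityMeasure X, |J μ| ≤ B := by
    intro μ
    have h := BoundedContinuousFunction.norm_integral_le_norm (μ := (μ : Measure X)) fJ
    rwa [Real.norm_eq_abs] at h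
  -- minimizer over maximizing measures
  obtain ⟨μ₀, hμ₀C, hμ₀max'⟩ := hFeq p
  have hμ₀max : I p μ₀ = F p := hμ₀max'
  set Mset : Set (ProbabilityMeasure X) := {μ | μ ∈ C ∧ I p μ = F p} with hMset
  have hμ₀M : μ₀ ∈ Mset := ⟨hμ₀C, hμ₀max⟩
  have hbdd : BddBelow (J '' Mset) := by
    refine ⟨-B, ?_⟩
    rintro y ⟨μ, _, rfl⟩
    linarith [(abs_le.1 (hJB μ)).1]
  have hne : (J '' Mset).Nonempty := ⟨J μ₀, mem_image_of_mem J hμ₀M⟩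
  set Imin : ℝ := sInf (J '' Mset) with hImin
  have hseq : ∀ k : ℕ, ∃ μ ∈ Mset, J μ < Imin + 1 / ((k : ℝ) + 1) := by
    intro k
    have hlt : Imin < Imin + 1 / ((k : ℝ) + 1) := by
      have : (0:ℝ) < 1 / ((k : ℝ) + 1) := by positivity
      linarith
    obtain ⟨y, hy, hylt⟩ := exists_lt_of_csInf_lt hne hlt
    obtain ⟨μ, hμ, rfl⟩ := hy
    exact ⟨μ, hμ, hylt⟩
  choose νs hνs hνslt using hseq
  obtain ⟨μstar, ψ, hψ, hψconv⟩ := probMeasure_exists_subseq_tendsto νs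
  have hμstarC : μstar ∈ C :=
    hCclosed.mem_of_tendsto hψconv (Eventually.of_forall fun j => (hνs (ψ j)).1)
  have hIconv : Tendsto (fun j => I p (νs (ψ j))) atTop (𝓝 (I p μstar)) :=
    ((hIcont p).tendsto μstar).comp hψconv
  have hJconv : Tendsto (fun j => J (νs (ψ j))) atTop (𝓝 (J μstar)) :=
    (hJcont.tendsto μstar).comp hψconv
  have hμstarM : I p μstar = F p := by
    have h1 : (fun j => I p (νs (ψ j))) = fun _ => F p := funext fun j => (hνs (ψ j)).2
    rw [h1] at hIconv
    exact tendsto_nhds_unique hIconv tendsto_const_nhds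
  have hJmin : J μstar = Imin := by
    refine le_antisymm ?_ (csInf_le hbdd (mem_image_of_mem J ⟨hμstarC, hμstarM⟩))
    have hub : Tendsto (fun j => Imin + 1 / ((ψ j : ℝ) + 1)) atTop (𝓝 Imin) := by
      have h2 : Tendsto (fun j : ℕ => 1 / ((ψ j : ℝ) + 1)) atTop (𝓝 0) :=
        tendsto_one_div_add_atTop_nhds_zero_nat.comp hψ.tendsto_atTop
      simpa using tendsto_const_nhds.add h2
    exact le_of_tendsto_of_tendsto' hJconv hub (fun j => (hνslt (ψ j)).le)
  have hminprop : ∀ ν ∈ C, I p ν = F p → J μstar ≤ J ν := by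
    intro ν h1 h2
    rw [hJmin]
    exact csInf_le hbdd (mem_image_of_mem J ⟨h1, h2⟩)
  -- the difference quotient
  set q : ℝ → ℝ := fun t => (F (p + t • ξ) - F p) / t with hq
  have hqle : ∀ t, t < 0 → ∀ ν ∈ C, I p ν = F p → q t ≤ J ν := by
    intro t ht ν hν hνmax
    have h' : I (p + t • ξ) ν ≤ F (p + t • ξ) := hFle (p + t • ξ) ν hν
    rw [hsplit t ν, hνmax] at h'
    have hnum : t * J ν ≤ F (p + t • ξ) - F p := by linarith
    have hdiv := div_le_div_of_nonpos_of_le ht.le hnum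
    rwa [mul_div_cancel_left₀ _ ht.ne] at hdiv
  have hqmono : MonotoneOn q (Iio (0:ℝ)) := by
    intro s hs t ht hst
    obtain ⟨σ, hσC, hσmax'⟩ := hFeq (p + t • ξ)
    have hσ : I p σ + t * J σ = F (p + t • ξ) := by
      have h : I (p + t • ξ) σ = F (p + t • ξ) := hσmax'
      rwa [hsplit t σ] at h
    have hs' : I p σ + s * J σ ≤ F (p + s • ξ) := by
      have h' : I (p + s • ξ) σ ≤ F (p + s • ξ) := hFle (p + s • ξ) σ hσC
      rwa [hsplit s σ] at h'
    have h0 : I p σ ≤ F p := hFle p σ hσC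
    have hsne : (s:ℝ) ≠ 0 := ne_of_lt hs
    have htne : (t:ℝ) ≠ 0 := ne_of_lt ht
    have e1 : q t = J σ + (I p σ - F p) / t := by
      show (F (p + t • ξ) - F p) / t = J σ + (I p σ - F p) / t
      rw [← hσ]
      field_simp
      ring
    have e2 : q s ≤ J σ + (I p σ - F p) / s := by
      show (F (p + s • ξ) - F p) / s ≤ J σ + (I p σ - F p) / s
      have hnum : s * J σ + (I p σ - F p) ≤ F (p + s • ξ) - F p := by linarith
      have hdiv := div_le_div_of_nonpos_of_le (le_of_lt hs) hnum
      rw [add_div, mul_div_cancel_left₀ _ hsne] at hdiv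
      exact hdiv
    have e3 : (I p σ - F p) / s ≤ (I p σ - F p) / t := by
      have hc : I p σ - F p ≤ 0 := sub_nonpos.2 h0
      have h1t : 1 / t ≤ 1 / s := one_div_le_one_div_of_neg_of_le ht hst
      have := mul_le_mul_of_nonpos_left h1t hc
      rwa [mul_one_div, mul_one_div] at this
    linarith
  have hbddq : BddAbove (q '' Iio (0:ℝ)) := by
    refine ⟨J μstar, ?_⟩
    rintro y ⟨t, ht, rfl⟩
    exact hqle t ht μstar hμstarC hμstarM
  set D : ℝ := sSup (q '' Iio (0:ℝ)) with hD
  have htend : Tendsto q (𝓝[<] (0:ℝ)) (𝓝 D) := hqmono.tendsto_nhdsLT hbddq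
  have hDle : D ≤ J μstar := by
    refine csSup_le ⟨q (-1), mem_image_of_mem q (by norm_num)⟩ ?_
    rintro y ⟨t, ht, rfl⟩
    exact hqle t ht μstar hμstarC hμstarM
  -- approach along a sequence of negative times
  set ts : ℕ → ℝ := fun k => -(1 / ((k : ℝ) + 1)) with hts
  have hts_neg : ∀ k, ts k < 0 := by
    intro k
    have : (0:ℝ) < 1 / ((k : ℝ) + 1) := by positivity
    show -(1 / ((k : ℝ) + 1)) < 0
    linarith
  have hts0 : Tendsto ts atTop (𝓝 0) := by
    have h := (tendsto_one_div_add_atTop_nhds_zero_nat (𝕜 := ℝ)).neg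
    simpa [hts, one_div] using h
  have hσs : ∀ k : ℕ, ∃ μ ∈ C, I (p + ts k • ξ) μ = F (p + ts k • ξ) := fun k => hFeq _
  choose σs hσsC hσsmax using hσs
  obtain ⟨ρ, ψ2, hψ2, hψ2conv⟩ := probMeasure_exists_subseq_tendsto σs
  have hρC : ρ ∈ C :=
    hCclosed.mem_of_tendsto hψ2conv (Eventually.of_forall fun j => hσsC (ψ2 j))
  have hFval : ∀ k, F (p + ts k • ξ) = I p (σs k) + ts k * J (σs k) := fun k => by
    rw [← hσsmax k, hsplit]
  have habs' : ∀ (k : ℕ) (μ : ProbabilityMeasure X), |ts k| * |J μ| ≤ |ts k| * B :=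
    fun k μ => mul_le_mul_of_nonneg_left (hJB μ) (abs_nonneg _)
  have habs : ∀ (k : ℕ) (μ : ProbabilityMeasure X), |ts k * J μ| ≤ |ts k| * B := by
    intro k μ
    rw [abs_mul]
    exact habs' k μ
  have hFbound : ∀ k, |F (p + ts k • ξ) - F p| ≤ |ts k| * B := by
    intro k
    have hIle : I p (σs k) ≤ F p := hFle p (σs k) (hσsC k)
    have h2 : ts k * J (σs k) ≤ |ts k| * B := (le_abs_self _).trans (habs k (σs k))
    have h3 : I p μ₀ + ts k * J μ₀ ≤ F (p + ts k • ξ) := by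
      have h' : I (p + ts k • ξ) μ₀ ≤ F (p + ts k • ξ) := hFle (p + ts k • ξ) μ₀ hμ₀C
      rwa [hsplit (ts k) μ₀] at h'
    have h4 : -(|ts k| * B) ≤ ts k * J μ₀ := by
      have := neg_abs_le (ts k * J μ₀)
      linarith [habs k μ₀]
    have h5 := hFval k
    rw [abs_le]
    constructor
    · rw [hμ₀max] at h3
      linarith
    · linarith
  have hBtend : Tendsto (fun k => |ts k| * B) atTop (𝓝 0) := by
    have h1 : Tendsto (fun k => |ts k|) atTop (𝓝 0) := by
      have := hts0.abs
      simpa using this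
    simpa using h1.mul_const B
  have hFconv : Tendsto (fun k => F (p + ts k • ξ)) atTop (𝓝 (F p)) := by
    have h1 : Tendsto (fun k => F (p + ts k • ξ) - F p) atTop (𝓝 0) :=
      squeeze_zero_norm (fun k => by simpa [Real.norm_eq_abs] using hFbound k) hBtend
    have h2 := h1.add_const (F p)
    simpa using h2
  have hJσbd : ∀ k, J (σs k) ≤ q (ts k) := by
    intro k
    have h0 : I p (σs k) ≤ F p := hFle p (σs k) (hσsC k)
    have e1 : q (ts k) = J (σs k) + (I p (σs k) - F p) / ts k := by
      show (F (p + ts k • ξ) - F p) / ts k = J (σs k) + (I p (σs k) - F p) / ts k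
      rw [hFval k]
      have : ts k ≠ 0 := (hts_neg k).ne
      field_simp
      ring
    have e2 : 0 ≤ (I p (σs k) - F p) / ts k := by
      rw [le_div_iff_of_neg (hts_neg k)]
      nlinarith
    linarith
  have hqD : ∀ k, q (ts k) ≤ D :=
    fun k => le_csSup hbddq (mem_image_of_mem q (hts_neg k))
  have hJρ : Tendsto (fun j => J (σs (ψ2 j))) atTop (𝓝 (J ρ)) :=
    (hJcont.tendsto ρ).comp hψ2conv
  have hJρD : J ρ ≤ D :=
    le_of_tendsto hJρ (Eventually.of_forall fun j => (hJσbd (ψ2 j)).trans (hqD (ψ2 j)))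
  have hIρ : Tendsto (fun j => I p (σs (ψ2 j))) atTop (𝓝 (I p ρ)) :=
    ((hIcont p).tendsto ρ).comp hψ2conv
  have hJ0tend : Tendsto (fun k => ts k * J (σs k)) atTop (𝓝 0) :=
    squeeze_zero_norm (fun k => by rw [Real.norm_eq_abs]; exact habs k (σs k)) hBtend
  have hIσconv : Tendsto (fun k => I p (σs k)) atTop (𝓝 (F p)) := by
    have h1 : (fun k => I p (σs k))
        = fun k => F (p + ts k • ξ) - ts k * J (σs k) := by
      funext k
      rw [hFval k]
      ring
    rw [h1]
    simpa using hFconv.sub hJ0tend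
  have hρmax : I p ρ = F p :=
    tendsto_nhds_unique hIρ (hIσconv.comp hψ2.tendsto_atTop)
  have hJμstarD : J μstar = D :=
    le_antisymm ((hminprop ρ hρC hρmax).trans hJρD) hDle
  refine ⟨μstar, hμstarC, hμstarM, ?_, ?_⟩
  · intro ν hν hνmax
    exact hminprop ν hν hνmax
  · rw [← hJμstarD] at htend
    exact htend
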